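/- Let P = (T, H, V) be a tiling problem and T_P the SSCC TBox defined in the context. Then P has a solution (a map π : ℕ × ℕ → T with (π(i,j), π(i+1,j)) ∈ H and (π(i,j), π(i,j+1)) ∈ V for all i, j ∈ ℕ) if and only if T_P is consistent, i.e., T_P has a finitely branching model satisfying all its concept inclusions and transitivity axioms. -/

import Mathlib

namespace SSCC

mutual
/-- ALCSCC concepts (no concrete domain). -/
inductive Concept : Type where
  | atom (A : ℕ)
  | neg (C : Concept)
  | conj (C₁ C₂ : Concept)
  | succr (con : QCon)

/-- Set terms whose set variables are role names and concepts. -/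
inductive SetTerm : Type where
  | role (r : ℕ)
  | concept (C : Concept)
  | empty
  | univ
  | inter (s t : SetTerm)
  | union (s t : SetTerm)
  | compl (s : SetTerm)

inductive LinExpr : Type where
  | const (n : ℕ)
  | add (l₁ l₂ : LinExpr)
  | card (n : ℕ) (s : SetTerm)

inductive QCon : Type where
  | subset (s t : SetTerm)
  | seteq (s t : SetTerm)
  | numeq (l₁ l₂ : LinExpr)
  | numlt (l₁ l₂ : LinExpr)
  | dvd (n : ℕ) (l : LinExpr)
  | not (c : QCon)
  | and (c₁ c₂ : QCon)
  | or (c₁ c₂ : QCon)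
end

/-- An SSCC TBox: concept inclusions together with transitivity declarations. -/
structure STBox : Type where
  cis : List (Concept × Concept)
  trans : List ℕ

structure Interp : Type 1 where
  Δ : Type
  delta_nonempty : Nonempty Δ
  conc : ℕ → Set Δ
  role : ℕ → Δ → Δ → Prop

def Interp.succs (I : Interp) (d : I.Δ) : Set I.Δ := { e | ∃ r, I.role r d e }

def FinBranching (I : Interp) : Prop := ∀ d, (I.succs d).Finite

mutual
noncomputable def csem (I : Interp) : Concept → Set I.Δ
  | .atom A => I.conc A
  | .neg C => (csem I C)ᶜ
  | .conj C₁ C₂ => csem I C₁ ∩ csem I C₂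
  | .succr con => { d | qsat I d con }

noncomputable def ssem (I : Interp) (d : I.Δ) : SetTerm → Set I.Δ
  | .role r => { e | I.role r d e }
  | .concept C => csem I C ∩ I.succs d
  | .empty => ∅
  | .univ => I.succs d
  | .inter s t => ssem I d s ∩ ssem I d t
  | .union s t => ssem I d s ∪ ssem I d t
  | .compl s => I.succs d \ ssem I d s

noncomputable def lsem (I : Interp) (d : I.Δ) : LinExpr → ℕ
  | .const n => n
  | .add l₁ l₂ => lsem I d l₁ + lsem I d l₂
  | .card n s => n * (ssem I d s).ncard

noncomputable def qsat (I : Interp) (d : I.Δ) : QCon → Prop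
  | .subset s t => ssem I d s ⊆ ssem I d t
  | .seteq s t => ssem I d s = ssem I d t
  | .numeq l₁ l₂ => lsem I d l₁ = lsem I d l₂
  | .numlt l₁ l₂ => lsem I d l₁ < lsem I d l₂
  | .dvd n l => n ∣ lsem I d l
  | .not c => ¬ qsat I d c
  | .and c₁ c₂ => qsat I d c₁ ∧ qsat I d c₂
  | .or c₁ c₂ => qsat I d c₁ ∨ qsat I d c₂
end

/-- A finitely branching model of an SSCC TBox: all concept inclusions hold and all
declared-transitive roles are interpreted by transitive relations. -/
def IsModel (I : Interp) (T : STBox) : Prop :=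
  FinBranching I ∧ (∀ ci ∈ T.cis, csem I ci.1 ⊆ csem I ci.2) ∧
    ∀ r ∈ T.trans, Transitive (I.role r)

def Consistent (T : STBox) : Prop := ∃ I : Interp, IsModel I T

/-! ### Derived operations -/

def bot : Concept := Concept.conj (Concept.atom 0) (Concept.neg (Concept.atom 0))
def top : Concept := Concept.neg bot
def cOr (C₁ C₂ : Concept) : Concept := Concept.neg (Concept.conj (Concept.neg C₁) (Concept.neg C₂))
def bigOr (l : List Concept) : Concept := l.foldr cOr bot
def bigAnd (l : List Concept) : Concept := l.foldr Concept.conj top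

/-! ### The tiling TBox -/

/-- A tiling problem: tile types `Fin m` with horizontal/vertical matching relations. -/
structure Tiling : Type where
  m : ℕ
  H : Finset (Fin m × Fin m)
  V : Finset (Fin m × Fin m)

/-- A solution of the tiling problem. -/
def Tiling.Solvable (P : Tiling) : Prop :=
  ∃ π : ℕ → ℕ → Fin P.m,
    ∀ i j : ℕ, (π i j, π (i + 1) j) ∈ P.H ∧ (π i j, π i (j + 1)) ∈ P.V

namespace TP

variable (P : Tiling)

/-- Concept name `A_t` for a tile type. -/
def At (t : Fin P.m) : Concept := Concept.atom t.val
/-- Concept name `A_ij`, `i, j ∈ {0,1}`. -/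
def Aij (i j : Bool) : Concept :=
  Concept.atom (P.m + (cond i 2 0) + (cond j 1 0))
/-- The roles `h`, `v`, `h_i`, `v_j`, `r_ij`. -/
def hR : ℕ := 0
def vR : ℕ := 1
def hiR (i : Bool) : ℕ := 2 + cond i 1 0
def vjR (j : Bool) : ℕ := 4 + cond j 1 0
def rijR (i j : Bool) : ℕ := 6 + (cond i 2 0) + (cond j 1 0)

def bools : List Bool := [false, true]

/-- `|s| = 1`. -/
def cardOne (s : SetTerm) : QCon := QCon.numeq (LinExpr.card 1 s) (LinExpr.const 1)

/-- role inclusion `r ⊑ s`, i.e. `⊤ ⊑ succ(r ⊆ s)`. -/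
def roleIncl (r s : ℕ) : Concept × Concept :=
  (top, Concept.succr (QCon.subset (SetTerm.role r) (SetTerm.role s)))

/-- exactly-one-of for a list of concepts. -/
def exactlyOne (l : List Concept) : Concept :=
  Concept.conj (bigOr l)
    (bigAnd ((l.zipIdx.map Prod.swap).flatMap fun p => (l.zipIdx.map Prod.swap).filterMap fun q =>
      if p.1 ≠ q.1 then some (Concept.neg (Concept.conj p.2 q.2)) else none))

/-- The SSCC TBox `T_P`. -/
def tilingTBox : STBox where
  cis :=
    -- (successors)
    [(top, exactlyOne ((List.finRange P.m).map (At P))),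
     (top, Concept.succr (QCon.and (cardOne (SetTerm.role hR)) (cardOne (SetTerm.role vR))))] ++
    -- (matching)
    ((List.finRange P.m).flatMap fun t =>
      [(At P t, Concept.succr (QCon.subset (SetTerm.role hR)
          (SetTerm.concept (bigOr ((List.finRange P.m).filterMap fun t' =>
            if (t, t') ∈ P.H then some (At P t') else none))))),
       (At P t, Concept.succr (QCon.subset (SetTerm.role vR)
          (SetTerm.concept (bigOr ((List.finRange P.m).filterMap fun t' =>
            if (t, t') ∈ P.V then some (At P t') else none)))))]) ++
    -- (super): h_i ⊑ r_ij and v_j ⊑ r_ij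
    (bools.flatMap fun i => bools.flatMap fun j =>
      [roleIncl (hiR i) (rijR i j), roleIncl (vjR j) (rijR i j)]) ++
    -- the four concepts A_ij partition the domain
    [(top, exactlyOne (bools.flatMap fun i => bools.map fun j => Aij P i j))] ++
    -- (local)
    (bools.flatMap fun i => bools.flatMap fun j =>
      [(Aij P i j, Concept.succr (QCon.and
          (QCon.subset (SetTerm.role hR) (SetTerm.concept (Aij P (!i) j)))
          (QCon.subset (SetTerm.role vR) (SetTerm.concept (Aij P i (!j)))))),
       (Aij P i j, Concept.succr (QCon.and
          (QCon.seteq (SetTerm.role hR) (SetTerm.role (hiR i)))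
          (QCon.seteq (SetTerm.role vR) (SetTerm.role (vjR j)))))]) ++
    -- (⋆)
    [(top, Concept.succr (cardOne (SetTerm.inter
        (SetTerm.compl (SetTerm.role hR)) (SetTerm.compl (SetTerm.role vR)))))]
  trans := bools.flatMap fun i => bools.map fun j => rijR i j

end TP




/-! ### Auxiliary semantic lemmas -/

lemma csem_bot (I : Interp) : csem I bot = ∅ := by
  simp [bot, csem]

lemma csem_top (I : Interp) : csem I top = Set.univ := by
  simp [top, csem, csem_bot]

lemma mem_csem_top (I : Interp) (d : I.Δ) : d ∈ csem I top := by
  simp [csem_top]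

lemma csem_cOr (I : Interp) (C D : Concept) :
    csem I (cOr C D) = csem I C ∪ csem I D := by
  simp [cOr, csem, Set.compl_inter, compl_compl]

lemma mem_bigOr {I : Interp} {d : I.Δ} {l : List Concept} :
    d ∈ csem I (bigOr l) ↔ ∃ C ∈ l, d ∈ csem I C := by
  induction l with
  | nil => simp [bigOr, csem_bot]
  | cons C l ih =>
      show d ∈ csem I (cOr C (bigOr l)) ↔ _
      simp [csem_cOr, ih]

lemma mem_bigAnd {I : Interp} {d : I.Δ} {l : List Concept} :
    d ∈ csem I (bigAnd l) ↔ ∀ C ∈ l, d ∈ csem I C := by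
  induction l with
  | nil => simp [bigAnd, mem_csem_top]
  | cons C l ih =>
      show d ∈ csem I (Concept.conj C (bigAnd l)) ↔ _
      simp [csem, ih]

lemma mem_exactlyOne {I : Interp} {d : I.Δ} {l : List Concept} :
    d ∈ csem I (TP.exactlyOne l) ↔ (∃ C ∈ l, d ∈ csem I C) ∧
      ∀ i j : ℕ, i ≠ j → ∀ (hi : i < l.length) (hj : j < l.length),
        ¬ (d ∈ csem I l[i] ∧ d ∈ csem I l[j]) := by
  show d ∈ csem I (Concept.conj _ _) ↔ _
  simp only [csem, Set.mem_inter_iff, mem_bigOr, mem_bigAnd]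
  constructor
  · rintro ⟨h1, h2⟩
    refine ⟨h1, fun i j hij hi hj hc => ?_⟩
    have := h2 (Concept.neg (Concept.conj l[i] l[j])) ?_
    · simp [csem] at this
      exact this hc.1 hc.2
    · refine List.mem_flatMap.2 ⟨(i, l[i]), ?_, ?_⟩
      · exact List.mem_map.2 ⟨(l[i], i), List.mk_mem_zipIdx_iff_getElem?.2 (by simp [hi]), rfl⟩
      · refine List.mem_filterMap.2 ⟨(j, l[j]), ?_, ?_⟩
        · exact List.mem_map.2 ⟨(l[j], j), List.mk_mem_zipIdx_iff_getElem?.2 (by simp [hj]), rfl⟩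
        · simp [hij]
  · rintro ⟨h1, h2⟩
    refine ⟨h1, fun C hC => ?_⟩
    rcases List.mem_flatMap.1 hC with ⟨p, hp, hC⟩
    rcases List.mem_filterMap.1 hC with ⟨q, hq, hC⟩
    by_cases hpq : p.1 ≠ q.1
    · rw [if_pos hpq, Option.some.injEq] at hC
      subst hC
      obtain ⟨⟨x, i⟩, hp', rfl⟩ := List.mem_map.1 hp
      obtain ⟨⟨y, j⟩, hq', rfl⟩ := List.mem_map.1 hq
      simp only [Prod.swap_prod_mk] at hpq ⊢
      rw [List.mk_mem_zipIdx_iff_getElem?] at hp' hq'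
      rcases List.getElem?_eq_some_iff.1 hp' with ⟨hi, hip⟩
      rcases List.getElem?_eq_some_iff.1 hq' with ⟨hj, hjq⟩
      have := h2 i j hpq hi hj
      rw [hip, hjq] at this
      simp only [csem, Set.mem_compl_iff, Set.mem_inter_iff]
      tauto
    · simp [hpq] at hC


/-! ### Part B : from a tiling solution to a model -/

namespace TModel

open TP

/-- parity -/
def pb (n : ℕ) : Bool := decide (n % 2 = 1)

lemma pb_succ (n : ℕ) : pb (n + 1) = !pb n := by
  simp only [pb]
  rcases Nat.mod_two_eq_zero_or_one n with h | h <;> simp [Nat.add_mod, h]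

def hrel (p q : ℕ × ℕ) : Prop := q = (p.1 + 1, p.2)
def vrel (p q : ℕ × ℕ) : Prop := q = (p.1, p.2 + 1)
def drel (p q : ℕ × ℕ) : Prop := q = (p.1 + 1, p.2 + 1)

def rrel (i j : Bool) (p q : ℕ × ℕ) : Prop :=
  (hrel p q ∧ pb p.1 = i) ∨ (vrel p q ∧ pb p.2 = j) ∨
  (drel p q ∧ pb p.1 = i ∧ pb p.2 = j)

def roleI (n : ℕ) (p q : ℕ × ℕ) : Prop :=
  (n = hR ∧ hrel p q) ∨ (n = vR ∧ vrel p q) ∨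
  (∃ i, n = hiR i ∧ hrel p q ∧ pb p.1 = i) ∨
  (∃ j, n = vjR j ∧ vrel p q ∧ pb p.2 = j) ∨
  (∃ i j, n = rijR i j ∧ rrel i j p q)

variable (P : Tiling) (π : ℕ → ℕ → Fin P.m)

def concI (n : ℕ) : Set (ℕ × ℕ) :=
  { p | (n < P.m ∧ (π p.1 p.2).val = n) ∨
        n = P.m + (cond (pb p.1) 2 0) + (cond (pb p.2) 1 0) }

@[reducible] def I : Interp where
  Δ := ℕ × ℕ
  delta_nonempty := ⟨(0, 0)⟩
  conc := concI P π
  role := roleI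

@[simp] lemma I_role (n : ℕ) (p q : ℕ × ℕ) : (I P π).role n p q ↔ roleI n p q := Iff.rfl

lemma roleI_hR (p q : ℕ × ℕ) : roleI hR p q ↔ hrel p q := by
  cases hp1 : pb p.1 <;> cases hp2 : pb p.2 <;>
    simp [roleI, hR, vR, hiR, vjR, rijR, Bool.exists_bool, hp1, hp2]

lemma roleI_vR (p q : ℕ × ℕ) : roleI vR p q ↔ vrel p q := by
  cases hp1 : pb p.1 <;> cases hp2 : pb p.2 <;>
    simp [roleI, hR, vR, hiR, vjR, rijR, Bool.exists_bool, hp1, hp2]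

lemma roleI_hiR (i : Bool) (p q : ℕ × ℕ) : roleI (hiR i) p q ↔ hrel p q ∧ pb p.1 = i := by
  cases i <;> cases hp1 : pb p.1 <;> cases hp2 : pb p.2 <;>
    simp [roleI, hR, vR, hiR, vjR, rijR, Bool.exists_bool, hp1, hp2]

lemma roleI_vjR (j : Bool) (p q : ℕ × ℕ) : roleI (vjR j) p q ↔ vrel p q ∧ pb p.2 = j := by
  cases j <;> cases hp1 : pb p.1 <;> cases hp2 : pb p.2 <;>
    simp [roleI, hR, vR, hiR, vjR, rijR, Bool.exists_bool, hp1, hp2]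

lemma roleI_rijR (i j : Bool) (p q : ℕ × ℕ) : roleI (rijR i j) p q ↔ rrel i j p q := by
  cases i <;> cases j <;> cases hp1 : pb p.1 <;> cases hp2 : pb p.2 <;>
    simp [roleI, hR, vR, hiR, vjR, rijR, Bool.exists_bool, rrel, hp1, hp2] <;> tauto

lemma succs_eq (p : ℕ × ℕ) :
    (I P π).succs p = {(p.1 + 1, p.2), (p.1, p.2 + 1), (p.1 + 1, p.2 + 1)} := by
  ext q
  constructor
  · rintro ⟨r, hr⟩
    rcases hr with ⟨-, h⟩ | ⟨-, h⟩ | ⟨i, -, h, -⟩ | ⟨j, -, h, -⟩ | ⟨i, j, -, h⟩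
    · simp [hrel] at h; simp [h]
    · simp [vrel] at h; simp [h]
    · simp [hrel] at h; simp [h]
    · simp [vrel] at h; simp [h]
    · rcases h with ⟨h, -⟩ | ⟨h, -⟩ | ⟨h, -⟩ <;> simp [hrel, vrel, drel] at h <;> simp [h]
  · intro hq
    simp only [Set.mem_insert_iff, Set.mem_singleton_iff] at hq
    rcases hq with rfl | rfl | rfl
    · exact ⟨hR, Or.inl ⟨rfl, rfl⟩⟩
    · exact ⟨vR, Or.inr (Or.inl ⟨rfl, rfl⟩)⟩
    · refine ⟨rijR (pb p.1) (pb p.2), ?_⟩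
      refine Or.inr (Or.inr (Or.inr (Or.inr ⟨pb p.1, pb p.2, rfl, ?_⟩)))
      exact Or.inr (Or.inr ⟨rfl, rfl, rfl⟩)

lemma mem_At (p : ℕ × ℕ) (t : Fin P.m) :
    p ∈ csem (I P π) (At P t) ↔ π p.1 p.2 = t := by
  show p ∈ concI P π t.val ↔ _
  simp only [concI, Set.mem_setOf_eq]
  constructor
  · rintro (⟨-, h⟩ | h)
    · exact Fin.ext h
    · exfalso
      have h2 : t.val < P.m := t.2
      omega
  · rintro rfl
    exact Or.inl ⟨(π p.1 p.2).2, rfl⟩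

lemma mem_Aij (p : ℕ × ℕ) (i j : Bool) :
    p ∈ csem (I P π) (Aij P i j) ↔ pb p.1 = i ∧ pb p.2 = j := by
  show p ∈ concI P π _ ↔ _
  simp only [concI, Set.mem_setOf_eq]
  constructor
  · rintro (⟨h, -⟩ | h)
    · exfalso; cases i <;> cases j <;> simp at h <;> omega
    · cases i <;> cases j <;> cases hp1 : pb p.1 <;> cases hp2 : pb p.2 <;>
        rw [hp1, hp2] at h <;> simp_all <;> omega
  · rintro ⟨rfl, rfl⟩
    exact Or.inr rfl

lemma ssem_hR (p : ℕ × ℕ) :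
    ssem (I P π) p (SetTerm.role hR) = {(p.1 + 1, p.2)} := by
  ext q
  show roleI hR p q ↔ _
  rw [roleI_hR]
  simp [hrel]

lemma ssem_vR (p : ℕ × ℕ) :
    ssem (I P π) p (SetTerm.role vR) = {(p.1, p.2 + 1)} := by
  ext q
  show roleI vR p q ↔ _
  rw [roleI_vR]
  simp [vrel]

lemma rrel_trans (i j : Bool) : Transitive (rrel i j) := by
  rintro p q r hpq hqr
  rcases hpq with ⟨h1, h2⟩ | ⟨h1, h2⟩ | ⟨h1, h2, h3⟩
  · -- h-step from p
    rcases h1 with rfl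
    rcases hqr with ⟨h3, h4⟩ | ⟨h3, h4⟩ | ⟨h3, h4, h5⟩
    · simp [pb_succ, h2] at h4
    · rcases h3 with rfl
      exact Or.inr (Or.inr ⟨rfl, h2, h4⟩)
    · simp [pb_succ, h2] at h4
  · -- v-step from p
    rcases h1 with rfl
    rcases hqr with ⟨h3, h4⟩ | ⟨h3, h4⟩ | ⟨h3, h4, h5⟩
    · rcases h3 with rfl
      exact Or.inr (Or.inr ⟨rfl, h4, h2⟩)
    · simp [pb_succ, h2] at h4
    · simp [pb_succ, h2] at h5
  · -- d-step from p
    rcases h1 with rfl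
    rcases hqr with ⟨h4, h5⟩ | ⟨h4, h5⟩ | ⟨h4, h5, h6⟩
    · simp [pb_succ, h2] at h5
    · simp [pb_succ, h3] at h5
    · simp [pb_succ, h2] at h5


lemma ssem_role (p : ℕ × ℕ) (r : ℕ) :
    ssem (I P π) p (SetTerm.role r) = {q | roleI r p q} := rfl

lemma mem_succr {J : Interp} {d : J.Δ} {con : QCon} :
    d ∈ csem J (Concept.succr con) ↔ qsat J d con := Iff.rfl

lemma ssem_concept {J : Interp} {d : J.Δ} {C : Concept} :
    ssem J d (SetTerm.concept C) = csem J C ∩ J.succs d := rfl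

lemma isModel (hsol : ∀ i j : ℕ, (π i j, π (i + 1) j) ∈ P.H ∧ (π i j, π i (j + 1)) ∈ P.V) :
    IsModel (I P π) (tilingTBox P) := by
  refine ⟨?_, ?_, ?_⟩
  · -- finitely branching
    intro p
    rw [succs_eq]
    exact (Set.finite_singleton _).insert _ |>.insert _
  · -- concept inclusions
    intro ci hci
    simp only [tilingTBox, List.mem_append, List.mem_cons, List.mem_flatMap, List.mem_map,
      List.mem_singleton, List.not_mem_nil, or_false, bools] at hci
    rcases hci with (((((h | h) | ⟨t, -, (h | h)⟩) | ⟨i, -, j, -, (h | h)⟩) | h) |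
      ⟨i, -, j, -, (h | h)⟩) | h <;> subst h <;> intro p hp
    · -- exactlyOne tiles
      rw [mem_exactlyOne]
      constructor
      · exact ⟨At P (π p.1 p.2), List.mem_map.2 ⟨_, List.mem_finRange _, rfl⟩,
          (mem_At P π p _).2 rfl⟩
      · intro a b hab ha hb hc
        simp only [List.length_map, List.length_finRange] at ha hb
        rw [List.getElem_map, List.getElem_map] at hc
        rw [List.getElem_finRange, List.getElem_finRange] at hc
        rw [mem_At, mem_At] at hc
        apply hab
        have := hc.1.symm.trans hc.2
        simpa [Fin.ext_iff] using congrArg Fin.val this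
    · -- |h| = 1 ∧ |v| = 1
      rw [mem_succr]
      constructor
      · simp only [cardOne, qsat, lsem]
        rw [ssem_hR]; simp
      · simp only [cardOne, qsat, lsem]
        rw [ssem_vR]; simp
    · -- matching H
      rw [mem_At] at hp
      rw [mem_succr]
      show ssem _ _ _ ⊆ ssem _ _ _
      rw [ssem_hR, ssem_concept]
      intro q hq
      rw [Set.mem_singleton_iff] at hq
      subst hq hp
      refine ⟨mem_bigOr.2 ⟨At P (π (p.1 + 1) p.2), ?_, (mem_At P π _ _).2 rfl⟩, ?_⟩
      · exact List.mem_filterMap.2 ⟨π (p.1 + 1) p.2, List.mem_finRange _,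
          by rw [if_pos (hsol p.1 p.2).1]⟩
      · rw [succs_eq]; simp
    · -- matching V
      rw [mem_At] at hp
      rw [mem_succr]
      show ssem _ _ _ ⊆ ssem _ _ _
      rw [ssem_vR, ssem_concept]
      intro q hq
      rw [Set.mem_singleton_iff] at hq
      subst hq hp
      refine ⟨mem_bigOr.2 ⟨At P (π p.1 (p.2 + 1)), ?_, (mem_At P π _ _).2 rfl⟩, ?_⟩
      · exact List.mem_filterMap.2 ⟨π p.1 (p.2 + 1), List.mem_finRange _,
          by rw [if_pos (hsol p.1 p.2).2]⟩
      · rw [succs_eq]; simp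
    · -- role inclusion h_i ⊑ r_ij
      simp only [roleIncl] at hp ⊢
      rw [mem_succr]
      show ssem _ _ _ ⊆ ssem _ _ _
      rw [ssem_role, ssem_role]
      intro q hq
      exact (roleI_rijR i j p q).2 (Or.inl ((roleI_hiR i p q).1 hq))
    · -- role inclusion v_j ⊑ r_ij
      simp only [roleIncl] at hp ⊢
      rw [mem_succr]
      show ssem _ _ _ ⊆ ssem _ _ _
      rw [ssem_role, ssem_role]
      intro q hq
      exact (roleI_rijR i j p q).2 (Or.inr (Or.inl ((roleI_vjR j p q).1 hq)))
    · -- partition into the four classes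
      have hl : ([false, true].flatMap fun i => List.map (fun j => Aij P i j) [false, true]) =
          [Aij P false false, Aij P false true, Aij P true false, Aij P true true] := rfl
      rw [hl, mem_exactlyOne]
      constructor
      · refine ⟨Aij P (pb p.1) (pb p.2), ?_, (mem_Aij P π p _ _).2 ⟨rfl, rfl⟩⟩
        cases pb p.1 <;> cases pb p.2 <;> simp
      · intro a b hab ha hb hc
        have ha' : a < 4 := by simpa using ha
        have hb' : b < 4 := by simpa using hb
        interval_cases a <;> interval_cases b <;> simp_all <;>
          · rw [mem_Aij, mem_Aij] at hc
            obtain ⟨⟨e1, e2⟩, e3, e4⟩ := hc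
            first
            | exact Bool.noConfusion (e1.symm.trans e3)
            | exact Bool.noConfusion (e2.symm.trans e4)
    · -- local 1
      rw [mem_Aij] at hp
      rw [mem_succr]
      refine ⟨?_, ?_⟩
      · show ssem _ _ _ ⊆ ssem _ _ _
        rw [ssem_hR, ssem_concept]
        intro q hq
        rw [Set.mem_singleton_iff] at hq
        subst hq
        refine ⟨(mem_Aij P π _ _ _).2 ⟨?_, ?_⟩, by rw [succs_eq]; simp⟩
        · simp [pb_succ, hp.1]
        · exact hp.2
      · show ssem _ _ _ ⊆ ssem _ _ _
        rw [ssem_vR, ssem_concept]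
        intro q hq
        rw [Set.mem_singleton_iff] at hq
        subst hq
        refine ⟨(mem_Aij P π _ _ _).2 ⟨hp.1, ?_⟩, by rw [succs_eq]; simp⟩
        simp [pb_succ, hp.2]
    · -- local 2
      rw [mem_Aij] at hp
      rw [mem_succr]
      refine ⟨?_, ?_⟩
      · show ssem _ _ _ = ssem _ _ _
        rw [ssem_role, ssem_role]
        ext q
        rw [Set.mem_setOf_eq, Set.mem_setOf_eq, roleI_hR, roleI_hiR]
        exact ⟨fun h => ⟨h, hp.1⟩, fun h => h.1⟩
      · show ssem _ _ _ = ssem _ _ _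
        rw [ssem_role, ssem_role]
        ext q
        rw [Set.mem_setOf_eq, Set.mem_setOf_eq, roleI_vR, roleI_vjR]
        exact ⟨fun h => ⟨h, hp.2⟩, fun h => h.1⟩
    · -- star
      rw [mem_succr]
      simp only [cardOne, qsat, lsem]
      have : ssem (I P π) p ((SetTerm.role hR).compl.inter (SetTerm.role vR).compl) =
          {(p.1 + 1, p.2 + 1)} := by
        show ((I P π).succs p \ _) ∩ ((I P π).succs p \ _) = _
        rw [ssem_hR, ssem_vR, succs_eq]
        ext q
        simp only [Set.mem_inter_iff, Set.mem_diff, Set.mem_insert_iff,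
          Set.mem_singleton_iff]
        constructor
        · rintro ⟨⟨h1 | h1 | h1, h2⟩, -, h3⟩
          · exact absurd h1 h2
          · exact absurd h1 h3
          · exact h1
        · rintro rfl
          refine ⟨⟨Or.inr (Or.inr rfl), fun hc => ?_⟩, Or.inr (Or.inr rfl), fun hc => ?_⟩
          · exact Nat.succ_ne_self p.2 (congrArg Prod.snd hc)
          · exact Nat.succ_ne_self p.1 (congrArg Prod.fst hc)
      rw [this]
      simp
  · -- transitivity
    intro r hr
    simp only [tilingTBox, bools, List.mem_flatMap, List.mem_map, List.mem_cons,
      List.not_mem_nil, or_false] at hr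
    obtain ⟨i, -, j, -, rfl⟩ := hr
    intro a b c h1 h2
    have h1' := (roleI_rijR i j a b).1 h1
    have h2' := (roleI_rijR i j b c).1 h2
    exact (roleI_rijR i j a c).2 (rrel_trans i j h1' h2')

end TModel


/-! ### Part C : from a model to a tiling solution -/

section ModelToSolution

open TP

variable {P : Tiling} {J : Interp}

lemma ssem_role' (d : J.Δ) (r : ℕ) :
    ssem J d (SetTerm.role r) = {e | J.role r d e} := rfl

lemma qsat_and {d : J.Δ} {c₁ c₂ : QCon} :
    qsat J d (QCon.and c₁ c₂) ↔ qsat J d c₁ ∧ qsat J d c₂ := Iff.rfl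

lemma mem_bool (i : Bool) : i = false ∨ i = true := by cases i <;> simp

set_option maxHeartbeats 1000000 in
lemma solvable_of_model (hM : IsModel J (tilingTBox P)) : P.Solvable := by
  classical
  obtain ⟨hfb, hcis, htr⟩ := hM
  -- membership helpers
  have hmem : ∀ ci : Concept × Concept, ci ∈ (tilingTBox P).cis ↔
      ((((( (ci = (top, exactlyOne ((List.finRange P.m).map (At P)))) ∨
        ci = (top, Concept.succr ((cardOne (SetTerm.role hR)).and (cardOne (SetTerm.role vR))))) ∨
        ∃ t ∈ List.finRange P.m,
          (ci = (At P t, Concept.succr (QCon.subset (SetTerm.role hR)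
            (SetTerm.concept (bigOr ((List.finRange P.m).filterMap fun t' =>
              if (t, t') ∈ P.H then some (At P t') else none))))) ∨
           ci = (At P t, Concept.succr (QCon.subset (SetTerm.role vR)
            (SetTerm.concept (bigOr ((List.finRange P.m).filterMap fun t' =>
              if (t, t') ∈ P.V then some (At P t') else none))))))) ∨
        ∃ i, (i = false ∨ i = true) ∧ ∃ j, (j = false ∨ j = true) ∧
          (ci = roleIncl (hiR i) (rijR i j) ∨ ci = roleIncl (vjR j) (rijR i j))) ∨
        ci = (top, exactlyOne ([false, true].flatMap fun i =>
          List.map (fun j => Aij P i j) [false, true]))) ∨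
        ∃ i, (i = false ∨ i = true) ∧ ∃ j, (j = false ∨ j = true) ∧
          (ci = (Aij P i j, Concept.succr ((QCon.subset (SetTerm.role hR)
              (SetTerm.concept (Aij P (!i) j))).and
            (QCon.subset (SetTerm.role vR) (SetTerm.concept (Aij P i (!j)))))) ∨
           ci = (Aij P i j, Concept.succr ((QCon.seteq (SetTerm.role hR)
              (SetTerm.role (hiR i))).and
            (QCon.seteq (SetTerm.role vR) (SetTerm.role (vjR j))))))) ∨
        ci = (top, Concept.succr (cardOne
          ((SetTerm.role hR).compl.inter (SetTerm.role vR).compl))) := by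
    intro ci
    simp only [tilingTBox, List.mem_append, List.mem_cons, List.mem_flatMap, List.mem_map,
      List.mem_singleton, List.not_mem_nil, or_false, bools]
  -- tiles
  have h_tiles : ∀ d : J.Δ, d ∈ csem J (exactlyOne ((List.finRange P.m).map (At P))) :=
    fun d => hcis _ ((hmem _).2 (Or.inl (Or.inl (Or.inl (Or.inl (Or.inl (Or.inl rfl)))))))
      (mem_csem_top J d)
  have h_card : ∀ d : J.Δ,
      qsat J d ((cardOne (SetTerm.role hR)).and (cardOne (SetTerm.role vR))) :=
    fun d => hcis _ ((hmem _).2 (Or.inl (Or.inl (Or.inl (Or.inl (Or.inl (Or.inr rfl)))))))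
      (mem_csem_top J d)
  have h_matchH : ∀ t : Fin P.m, ∀ d ∈ csem J (At P t),
      qsat J d (QCon.subset (SetTerm.role hR)
        (SetTerm.concept (bigOr ((List.finRange P.m).filterMap fun t' =>
          if (t, t') ∈ P.H then some (At P t') else none)))) :=
    fun t d hd => hcis _ ((hmem _).2 (Or.inl (Or.inl (Or.inl (Or.inl
      (Or.inr ⟨t, List.mem_finRange t, Or.inl rfl⟩)))))) hd
  have h_matchV : ∀ t : Fin P.m, ∀ d ∈ csem J (At P t),
      qsat J d (QCon.subset (SetTerm.role vR)
        (SetTerm.concept (bigOr ((List.finRange P.m).filterMap fun t' =>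
          if (t, t') ∈ P.V then some (At P t') else none)))) :=
    fun t d hd => hcis _ ((hmem _).2 (Or.inl (Or.inl (Or.inl (Or.inl
      (Or.inr ⟨t, List.mem_finRange t, Or.inr rfl⟩)))))) hd
  have h_inclH : ∀ (i j : Bool) (d e : J.Δ), J.role (hiR i) d e → J.role (rijR i j) d e := by
    intro i j d e h
    have := hcis _ ((hmem _).2 (Or.inl (Or.inl (Or.inl (Or.inr
      ⟨i, mem_bool i, j, mem_bool j, Or.inl rfl⟩))))) (mem_csem_top J d)
    exact this h
  have h_inclV : ∀ (i j : Bool) (d e : J.Δ), J.role (vjR j) d e → J.role (rijR i j) d e := by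
    intro i j d e h
    have := hcis _ ((hmem _).2 (Or.inl (Or.inl (Or.inl (Or.inr
      ⟨i, mem_bool i, j, mem_bool j, Or.inr rfl⟩))))) (mem_csem_top J d)
    exact this h
  have h_part : ∀ d : J.Δ, d ∈ csem J (exactlyOne
      [Aij P false false, Aij P false true, Aij P true false, Aij P true true]) :=
    fun d => hcis _ ((hmem _).2 (Or.inl (Or.inl (Or.inr rfl)))) (mem_csem_top J d)
  have h_loc1 : ∀ (i j : Bool), ∀ d ∈ csem J (Aij P i j),
      qsat J d ((QCon.subset (SetTerm.role hR) (SetTerm.concept (Aij P (!i) j))).and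
        (QCon.subset (SetTerm.role vR) (SetTerm.concept (Aij P i (!j))))) :=
    fun i j d hd => hcis _ ((hmem _).2 (Or.inl (Or.inr
      ⟨i, mem_bool i, j, mem_bool j, Or.inl rfl⟩))) hd
  have h_loc2 : ∀ (i j : Bool), ∀ d ∈ csem J (Aij P i j),
      qsat J d ((QCon.seteq (SetTerm.role hR) (SetTerm.role (hiR i))).and
        (QCon.seteq (SetTerm.role vR) (SetTerm.role (vjR j)))) :=
    fun i j d hd => hcis _ ((hmem _).2 (Or.inl (Or.inr
      ⟨i, mem_bool i, j, mem_bool j, Or.inr rfl⟩))) hd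
  have h_star : ∀ d : J.Δ, qsat J d (cardOne
      ((SetTerm.role hR).compl.inter (SetTerm.role vR).compl)) :=
    fun d => hcis _ ((hmem _).2 (Or.inr rfl)) (mem_csem_top J d)
  have h_trans : ∀ i j : Bool, Transitive (J.role (rijR i j)) := by
    intro i j
    apply htr
    simp only [tilingTBox, bools, List.mem_flatMap, List.mem_map, List.mem_cons,
      List.not_mem_nil, or_false]
    exact ⟨i, mem_bool i, j, mem_bool j, rfl⟩
  -- unique tiles
  have tile_ex : ∀ d : J.Δ, ∃ t, d ∈ csem J (At P t) := by
    intro d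
    obtain ⟨⟨C, hC, hdC⟩, -⟩ := mem_exactlyOne.1 (h_tiles d)
    obtain ⟨t, -, rfl⟩ := List.mem_map.1 hC
    exact ⟨t, hdC⟩
  have tile_uniq : ∀ (d : J.Δ) (t t' : Fin P.m),
      d ∈ csem J (At P t) → d ∈ csem J (At P t') → t = t' := by
    intro d t t' h1 h2
    by_contra hne
    obtain ⟨-, hu⟩ := mem_exactlyOne.1 (h_tiles d)
    have hlt : t.val < ((List.finRange P.m).map (At P)).length := by simpa using t.2
    have hlt' : t'.val < ((List.finRange P.m).map (At P)).length := by simpa using t'.2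
    have e1 : ((List.finRange P.m).map (At P))[t.val] = At P t := by
      simp [List.getElem_map, List.getElem_finRange]
    have e2 : ((List.finRange P.m).map (At P))[t'.val] = At P t' := by
      simp [List.getElem_map, List.getElem_finRange]
    refine hu t.val t'.val (fun hc => hne (Fin.ext hc)) hlt hlt' ⟨?_, ?_⟩
    · rw [e1]; exact h1
    · rw [e2]; exact h2
  -- unique classes
  have class_ex : ∀ d : J.Δ, ∃ i j, d ∈ csem J (Aij P i j) := by
    intro d
    obtain ⟨⟨C, hC, hdC⟩, -⟩ := mem_exactlyOne.1 (h_part d)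
    simp only [List.mem_cons, List.not_mem_nil, or_false] at hC
    rcases hC with rfl | rfl | rfl | rfl
    exacts [⟨_, _, hdC⟩, ⟨_, _, hdC⟩, ⟨_, _, hdC⟩, ⟨_, _, hdC⟩]
  have class_uniq : ∀ (d : J.Δ) (i j i' j' : Bool),
      d ∈ csem J (Aij P i j) → d ∈ csem J (Aij P i' j') → i = i' ∧ j = j' := by
    intro d i j i' j' h1 h2
    obtain ⟨-, hu⟩ := mem_exactlyOne.1 (h_part d)
    by_contra hc
    have hidx : (cond i 2 0 + cond j 1 0 : ℕ) ≠ (cond i' 2 0 + cond j' 1 0 : ℕ) := by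
      cases i <;> cases j <;> cases i' <;> cases j' <;>
        first | decide | exact absurd ⟨rfl, rfl⟩ hc
    have := hu (cond i 2 0 + cond j 1 0) (cond i' 2 0 + cond j' 1 0) hidx
      (by cases i <;> cases j <;> simp) (by cases i' <;> cases j' <;> simp)
    apply this
    constructor
    · cases i <;> cases j <;> exact h1
    · cases i' <;> cases j' <;> exact h2
  -- successor functions
  have hone : ∀ d : J.Δ, ∃ e, {e' | J.role hR d e'} = {e} := by
    intro d
    have h1 := (qsat_and.1 (h_card d)).1
    simp only [cardOne, qsat, lsem, one_mul] at h1
    exact Set.ncard_eq_one.1 h1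
  have uone : ∀ d : J.Δ, ∃ e, {e' | J.role vR d e'} = {e} := by
    intro d
    have h1 := (qsat_and.1 (h_card d)).2
    simp only [cardOne, qsat, lsem, one_mul] at h1
    exact Set.ncard_eq_one.1 h1
  choose right hright using hone
  choose up hup using uone
  have hrole_r : ∀ d, J.role hR d (right d) :=
    fun d => (Set.ext_iff.1 (hright d) (right d)).2 rfl
  have hrole_u : ∀ d, J.role vR d (up d) :=
    fun d => (Set.ext_iff.1 (hup d) (up d)).2 rfl
  -- steps
  have step_r : ∀ (d : J.Δ) (i j : Bool), d ∈ csem J (Aij P i j) →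
      (∀ j', J.role (rijR i j') d (right d)) ∧ right d ∈ csem J (Aij P (!i) j) := by
    intro d i j hd
    have hl2 := (qsat_and.1 (h_loc2 i j d hd)).1
    have hhi : J.role (hiR i) d (right d) := by
      have := Set.ext_iff.1 hl2 (right d)
      exact this.1 (hrole_r d)
    have hl1 := (qsat_and.1 (h_loc1 i j d hd)).1
    have hcls : right d ∈ csem J (Aij P (!i) j) ∩ J.succs d := hl1 (hrole_r d)
    exact ⟨fun j' => h_inclH i j' d (right d) hhi, hcls.1⟩
  have step_u : ∀ (d : J.Δ) (i j : Bool), d ∈ csem J (Aij P i j) →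
      (∀ i', J.role (rijR i' j) d (up d)) ∧ up d ∈ csem J (Aij P i (!j)) := by
    intro d i j hd
    have hl2 := (qsat_and.1 (h_loc2 i j d hd)).2
    have hvj : J.role (vjR j) d (up d) := by
      have := Set.ext_iff.1 hl2 (up d)
      exact this.1 (hrole_u d)
    have hl1 := (qsat_and.1 (h_loc1 i j d hd)).2
    have hcls : up d ∈ csem J (Aij P i (!j)) ∩ J.succs d := hl1 (hrole_u d)
    exact ⟨fun i' => h_inclV i' j d (up d) hvj, hcls.1⟩
  -- confluence
  have comm : ∀ d : J.Δ, up (right d) = right (up d) := by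
    intro d
    obtain ⟨i, j, hd⟩ := class_ex d
    obtain ⟨hr1, hr1c⟩ := step_r d i j hd
    obtain ⟨hu1, hu1c⟩ := step_u d i j hd
    obtain ⟨hr2, hr2c⟩ := step_u (right d) (!i) j hr1c
    obtain ⟨hu2, hu2c⟩ := step_r (up d) i (!j) hu1c
    have e1 : J.role (rijR i j) d (up (right d)) := h_trans i j (hr1 j) (hr2 i)
    have e2 : J.role (rijR i j) d (right (up d)) := h_trans i j (hu1 i) (hu2 j)
    -- the star set
    have hstar := h_star d
    simp only [cardOne, qsat, lsem, one_mul] at hstar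
    obtain ⟨x, hx⟩ := Set.ncard_eq_one.1 hstar
    have hset : ssem J d ((SetTerm.role hR).compl.inter (SetTerm.role vR).compl) =
        (J.succs d \ {e | J.role hR d e}) ∩ (J.succs d \ {e | J.role vR d e}) := rfl
    rw [hset] at hx
    have hmem_star : ∀ e : J.Δ, J.role (rijR i j) d e →
        e ∈ csem J (Aij P (!i) (!j)) → e = x := by
      intro e he hec
      have hes : e ∈ J.succs d := ⟨_, he⟩
      have hnh : e ∉ {e' | J.role hR d e'} := by
        intro hc
        have : e = right d := by
          have := Set.ext_iff.1 (hright d) e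
          exact this.1 hc
        subst this
        have := class_uniq _ _ _ _ _ hec hr1c
        simp at this
      have hnv : e ∉ {e' | J.role vR d e'} := by
        intro hc
        have : e = up d := by
          have := Set.ext_iff.1 (hup d) e
          exact this.1 hc
        subst this
        have := class_uniq _ _ _ _ _ hec hu1c
        simp at this
      have : e ∈ ({x} : Set J.Δ) := by
        rw [← hx]
        exact ⟨⟨hes, hnh⟩, hes, hnv⟩
      exact this
    have q1 := hmem_star _ e1 hr2c
    have q2 := hmem_star _ e2 (by simpa using hu2c)
    rw [q1, q2]
  -- build the solution
  obtain ⟨d0⟩ := J.delta_nonempty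
  choose tile htile using tile_ex
  have comm_iter : ∀ (n : ℕ) (x : J.Δ), up^[n] (right x) = right (up^[n] x) := by
    intro n
    induction n with
    | zero => intro x; rfl
    | succ n ih =>
        intro x
        rw [Function.iterate_succ_apply', Function.iterate_succ_apply', ih, comm]
  refine ⟨fun i j => tile (up^[j] (right^[i] d0)), ?_⟩
  intro a b
  dsimp only
  have hstep_r : up^[b] (right^[a + 1] d0) = right (up^[b] (right^[a] d0)) := by
    rw [Function.iterate_succ_apply', comm_iter]
  have hstep_u : up^[b + 1] (right^[a] d0) = up (up^[b] (right^[a] d0)) := by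
    rw [Function.iterate_succ_apply']
  set d := up^[b] (right^[a] d0) with hd
  constructor
  · -- horizontal
    rw [hstep_r]
    have hsub := h_matchH (tile d) d (htile d)
    have hmemr : right d ∈ csem J (bigOr ((List.finRange P.m).filterMap fun t' =>
        if (tile d, t') ∈ P.H then some (At P t') else none)) ∩ J.succs d :=
      hsub (hrole_r d)
    obtain ⟨C, hC, hrC⟩ := mem_bigOr.1 hmemr.1
    obtain ⟨t', -, hif⟩ := List.mem_filterMap.1 hC
    by_cases hH : (tile d, t') ∈ P.H
    · rw [if_pos hH, Option.some.injEq] at hif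
      subst hif
      have : tile (right d) = t' := tile_uniq _ _ _ (htile (right d)) hrC
      rw [this]
      exact hH
    · rw [if_neg hH] at hif
      exact absurd hif (by simp)
  · -- vertical
    rw [hstep_u]
    have hsub := h_matchV (tile d) d (htile d)
    have hmemu : up d ∈ csem J (bigOr ((List.finRange P.m).filterMap fun t' =>
        if (tile d, t') ∈ P.V then some (At P t') else none)) ∩ J.succs d :=
      hsub (hrole_u d)
    obtain ⟨C, hC, huC⟩ := mem_bigOr.1 hmemu.1
    obtain ⟨t', -, hif⟩ := List.mem_filterMap.1 hC
    by_cases hV : (tile d, t') ∈ P.V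
    · rw [if_pos hV, Option.some.injEq] at hif
      subst hif
      have : tile (up d) = t' := tile_uniq _ _ _ (htile (up d)) huC
      rw [this]
      exact hV
    · rw [if_neg hV] at hif
      exact absurd hif (by simp)

end ModelToSolution


open TP in
/-- The tiling problem `P` has a solution iff the SSCC TBox `T_P` is
consistent (has a finitely branching model satisfying all concept inclusions and
transitivity axioms). -/
theorem tiling_solvable_iff_consistent (P : Tiling) :
    P.Solvable ↔ Consistent (tilingTBox P) := by
  constructor
  · rintro ⟨π, hsol⟩
    exact ⟨TModel.I P π, TModel.isModel P π hsol⟩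
  · rintro ⟨J, hM⟩
    exact solvable_of_model hM

end SSCC
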